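/- Let α, β ∈ ℝ and let u, ψ : ℝ × ℝ → ℍ be smooth with u_t = (β − 3α²)(u²*u_x + u_x*u²) + β u*u_x*u + u_xxx (the first quaternion mKdV family) and ψ_t = α ψ*u_xx − α² ψ*[u,u_x] + (β − 2α²)α ψ*u³. Then the function φ := ψ_x − α ψ*u satisfies φ_t = α φ*u_xx − α² φ*[u,u_x] + (β − 2α²)α φ*u³. (Lax pair with K = R, i.e., all multiplications acting on the right.) -/

import Mathlib

/-- Partial derivative in `t` (the first coordinate). -/
noncomputable def pt (f : ℝ × ℝ → Quaternion ℝ) : ℝ × ℝ → Quaternion ℝ :=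
  fun p => deriv (fun s => f (s, p.2)) p.1

/-- Partial derivative in `x` (the second coordinate). -/
noncomputable def px (f : ℝ × ℝ → Quaternion ℝ) : ℝ × ℝ → Quaternion ℝ :=
  fun p => deriv (fun y => f (p.1, y)) p.2

section helpers
variable {f : ℝ × ℝ → Quaternion ℝ}

lemma sliceX_fderiv (hf : Differentiable ℝ f) (p : ℝ × ℝ) :
    HasDerivAt (fun y => f (p.1, y)) (fderiv ℝ f p ((0 : ℝ), (1 : ℝ))) p.2 := by
  have hc : HasDerivAt (fun y : ℝ => ((p.1 : ℝ), y)) ((0 : ℝ), (1 : ℝ)) p.2 :=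
    HasDerivAt.prodMk (hasDerivAt_const _ _) (hasDerivAt_id _)
  have h := (hf (p.1, p.2)).hasFDerivAt.comp_hasDerivAt p.2 hc
  simpa [Function.comp_def] using h

lemma px_eq (hf : Differentiable ℝ f) : px f = fun p => fderiv ℝ f p ((0:ℝ), (1:ℝ)) :=
  funext fun p => (sliceX_fderiv hf p).deriv

lemma sliceX (hf : Differentiable ℝ f) (p : ℝ × ℝ) :
    HasDerivAt (fun y => f (p.1, y)) (px f p) p.2 := by
  rw [px_eq hf]; exact sliceX_fderiv hf p

lemma sliceT_fderiv (hf : Differentiable ℝ f) (p : ℝ × ℝ) :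
    HasDerivAt (fun s => f (s, p.2)) (fderiv ℝ f p ((1 : ℝ), (0 : ℝ))) p.1 := by
  have hc : HasDerivAt (fun s : ℝ => (s, (p.2 : ℝ))) ((1 : ℝ), (0 : ℝ)) p.1 :=
    HasDerivAt.prodMk (hasDerivAt_id _) (hasDerivAt_const _ _)
  have h := (hf (p.1, p.2)).hasFDerivAt.comp_hasDerivAt p.1 hc
  simpa [Function.comp_def] using h

lemma pt_eq (hf : Differentiable ℝ f) : pt f = fun p => fderiv ℝ f p ((1:ℝ), (0:ℝ)) :=
  funext fun p => (sliceT_fderiv hf p).deriv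

lemma sliceT (hf : Differentiable ℝ f) (p : ℝ × ℝ) :
    HasDerivAt (fun s => f (s, p.2)) (pt f p) p.1 := by
  rw [pt_eq hf]; exact sliceT_fderiv hf p

lemma contDiff_px (hf : ContDiff ℝ (⊤ : ℕ∞) f) : ContDiff ℝ (⊤ : ℕ∞) (px f) := by
  rw [px_eq (hf.differentiable (by simp))]
  exact (hf.fderiv_right (by simp)).clm_apply contDiff_const

lemma contDiff_pt (hf : ContDiff ℝ (⊤ : ℕ∞) f) : ContDiff ℝ (⊤ : ℕ∞) (pt f) := by
  rw [pt_eq (hf.differentiable (by simp))]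
  exact (hf.fderiv_right (by simp)).clm_apply contDiff_const

lemma pt_px_comm (hf : ContDiff ℝ (⊤ : ℕ∞) f) (p : ℝ × ℝ) : pt (px f) p = px (pt f) p := by
  have hdf : Differentiable ℝ f := hf.differentiable (by simp)
  have hf' : ContDiff ℝ (⊤ : ℕ∞) (fderiv ℝ f) := hf.fderiv_right (by simp)
  have h2 : HasFDerivAt (fderiv ℝ f) (fderiv ℝ (fderiv ℝ f) p) p :=
    (hf'.differentiable (by simp) p).hasFDerivAt
  have hA : ∀ v : ℝ × ℝ, HasDerivAt (fun s => fderiv ℝ f (s, p.2) v)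
      ((fderiv ℝ (fderiv ℝ f) p ((1:ℝ),(0:ℝ))) v) p.1 := by
    intro v
    have hc : HasDerivAt (fun s : ℝ => (s, (p.2 : ℝ))) ((1 : ℝ), (0 : ℝ)) p.1 :=
      HasDerivAt.prodMk (hasDerivAt_id _) (hasDerivAt_const _ _)
    have h2' : HasFDerivAt (fderiv ℝ f) (fderiv ℝ (fderiv ℝ f) p) (p.1, p.2) := h2
    have h1 := HasFDerivAt.comp_hasDerivAt (l := fderiv ℝ f) (f := fun s : ℝ => (s, p.2)) p.1 h2' hc
    have h := h1.clm_apply (hasDerivAt_const p.1 v)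
    simpa using h
  have hB : ∀ v : ℝ × ℝ, HasDerivAt (fun y => fderiv ℝ f (p.1, y) v)
      ((fderiv ℝ (fderiv ℝ f) p ((0:ℝ),(1:ℝ))) v) p.2 := by
    intro v
    have hc : HasDerivAt (fun y : ℝ => ((p.1 : ℝ), y)) ((0 : ℝ), (1 : ℝ)) p.2 :=
      HasDerivAt.prodMk (hasDerivAt_const _ _) (hasDerivAt_id _)
    have h2' : HasFDerivAt (fderiv ℝ f) (fderiv ℝ (fderiv ℝ f) p) (p.1, p.2) := h2
    have h1 := HasFDerivAt.comp_hasDerivAt (l := fderiv ℝ f) (f := fun y : ℝ => (p.1, y)) p.2 h2' hc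
    have h := h1.clm_apply (hasDerivAt_const p.2 v)
    simpa using h
  have hsymm := second_derivative_symmetric (fun y => (hdf y).hasFDerivAt) h2
    ((1:ℝ),(0:ℝ)) ((0:ℝ),(1:ℝ))
  calc pt (px f) p = fderiv ℝ (fderiv ℝ f) p ((1:ℝ),(0:ℝ)) ((0:ℝ),(1:ℝ)) := by
        rw [px_eq hdf]; exact (hA _).deriv
    _ = fderiv ℝ (fderiv ℝ f) p ((0:ℝ),(1:ℝ)) ((1:ℝ),(0:ℝ)) := hsymm
    _ = px (pt f) p := by rw [pt_eq hdf]; exact (hB _).deriv.symm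

end helpers

theorem lax_alg {A : Type*} [Ring A] [Algebra ℝ A] (α β : ℝ) (P P1 V V1 V2 V3 : A) :
    (α • (P1 * V2 + P * V3)
       - α ^ 2 • (P1 * (V * V1 - V1 * V)
          + P * ((V1 * V1 + V * V2) - (V2 * V + V1 * V1)))
       + ((β - 2 * α ^ 2) * α) • (P1 * (V * V * V)
          + P * ((V1 * V + V * V1) * V + V * V * V1)))
    - α • ((α • (P * V2) - α ^ 2 • (P * (V * V1 - V1 * V))
            + ((β - 2 * α ^ 2) * α) • (P * V ^ 3)) * V
        + P * ((β - 3 * α ^ 2) • (V ^ 2 * V1 + V1 * V ^ 2)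
            + β • (V * V1 * V) + V3))
    = α • ((P1 - α • (P * V)) * V2)
      - α ^ 2 • ((P1 - α • (P * V)) * (V * V1 - V1 * V))
      + ((β - 2 * α ^ 2) * α) • ((P1 - α • (P * V)) * V ^ 3) := by
  simp only [pow_succ, pow_zero, one_mul]
  simp only [mul_add, add_mul, mul_sub, sub_mul, smul_mul_assoc, mul_smul_comm,
    smul_smul, smul_add, smul_sub, mul_assoc]
  module



/-- Lax pair with `K = R` (all multiplications on the right) for the first
quaternion mKdV family. -/
theorem mkdv1_lax_right (α β : ℝ) (u ψ φ : ℝ × ℝ → Quaternion ℝ)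
    (hu : ContDiff ℝ (⊤ : ℕ∞) u) (hψ : ContDiff ℝ (⊤ : ℕ∞) ψ)
    (hut : ∀ p, pt u p = (β - 3 * α ^ 2) • (u p ^ 2 * px u p + px u p * u p ^ 2)
      + β • (u p * px u p * u p) + px (px (px u)) p)
    (hψt : ∀ p, pt ψ p = α • (ψ p * px (px u) p)
      - (α ^ 2) • (ψ p * (u p * px u p - px u p * u p))
      + ((β - 2 * α ^ 2) * α) • (ψ p * u p ^ 3))
    (hφ : φ = fun p => px ψ p - α • (ψ p * u p)) :
    ∀ p, pt φ p = α • (φ p * px (px u) p)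
      - (α ^ 2) • (φ p * (u p * px u p - px u p * u p))
      + ((β - 2 * α ^ 2) * α) • (φ p * u p ^ 3) := by
  intro p
  have hψd := hψ.differentiable (by simp)
  have hud := hu.differentiable (by simp)
  have hψx := contDiff_px hψ
  have hux := contDiff_px hu
  have huxx := contDiff_px hux
  have hψxd := hψx.differentiable (by simp)
  have huxd := hux.differentiable (by simp)
  have huxxd := huxx.differentiable (by simp)
  have key : pt ψ = fun q => α • (ψ q * px (px u) q)
      - α ^ 2 • (ψ q * (u q * px u q - px u q * u q))
      + ((β - 2 * α ^ 2) * α) • (ψ q * (u q * u q * u q)) := by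
    funext q; rw [hψt q]; simp only [pow_succ, pow_zero, one_mul]
  have h1 : HasDerivAt (fun s => φ (s, p.2))
      (pt (px ψ) p - α • (pt ψ p * u p + ψ p * pt u p)) p.1 := by
    rw [hφ]
    exact (sliceT hψxd p).sub (((sliceT hψd p).mul (sliceT hud p)).const_smul α)
  have e1 : pt φ p = pt (px ψ) p - α • (pt ψ p * u p + ψ p * pt u p) := h1.deriv
  have h2 : HasDerivAt (fun y => pt ψ (p.1, y))
      (α • (px ψ p * px (px u) p + ψ p * px (px (px u)) p)
       - α ^ 2 • (px ψ p * (u p * px u p - px u p * u p)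
          + ψ p * ((px u p * px u p + u p * px (px u) p)
            - (px (px u) p * u p + px u p * px u p)))
       + ((β - 2 * α ^ 2) * α) • (px ψ p * (u p * u p * u p)
          + ψ p * ((px u p * u p + u p * px u p) * u p + u p * u p * px u p))) p.2 := by
    rw [key]
    exact ((((sliceX hψd p).mul (sliceX huxxd p)).const_smul α).sub
      (((sliceX hψd p).mul (((sliceX hud p).mul (sliceX huxd p)).sub
        ((sliceX huxd p).mul (sliceX hud p)))).const_smul (α ^ 2))).add
      (((sliceX hψd p).mul (((sliceX hud p).mul (sliceX hud p)).mul
        (sliceX hud p))).const_smul ((β - 2 * α ^ 2) * α))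
  have e2 : px (pt ψ) p = _ := h2.deriv
  have e3 : pt (px ψ) p = px (pt ψ) p := pt_px_comm hψ p
  rw [e1, e3, e2, hψt p, hut p, hφ]
  exact lax_alg α β (ψ p) (px ψ p) (u p) (px u p) (px (px u) p) (px (px (px u)) p)
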